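/- arXiv:1905.09301 — 5 statements merged into one kernel-verified Lean document; each statement's English description precedes it below -/
import Mathlib

section
/- Let F : ℝ → [0,1] be a cumulative distribution function and let U be a random variable uniformly distributed on the open unit interval (0,1). Then the random variable X := F†(U), where F† is the pseudo-inverse of F, has cumulative distribution function F; that is, for every x ∈ ℝ, the probability that F†(U) ≤ x equals F(x). Equivalently, the pushforward of the uniform (Lebesgue) measure on (0,1) under F† is the probability measure on the Borel real line whose cdf is F. -/
open MeasureTheory Filter Topology Set

noncomputable section

/-- Inverse transform sampling: if `F` is a cumulative distribution function
and `U` is uniformly distributed on `(0,1)` (i.e. its law is Lebesgue measure restricted to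
`(0,1)`), then `F†(U)` has cdf `F`: the pushforward of the uniform measure on `(0,1)` under
the pseudo-inverse `F†` assigns mass `F x` to each half-line `(-∞, x]`. -/
theorem inverse_transform_sampling (F : ℝ → ℝ)
    (hmono : Monotone F)
    (hrc : ∀ x : ℝ, ContinuousWithinAt F (Set.Ici x) x)
    (hbot : Tendsto F atBot (𝓝 (0 : ℝ)))
    (htop : Tendsto F atTop (𝓝 (1 : ℝ)))
    (Fdag : ℝ → ℝ) (hFdag : ∀ u ∈ Set.Ioo (0 : ℝ) 1, Fdag u = sInf {y : ℝ | u ≤ F y}) :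
    ∀ x : ℝ,
      (volume.restrict (Set.Ioo (0 : ℝ) 1)).map Fdag (Set.Iic x) = ENNReal.ofReal (F x) := by
  -- F is between 0 and 1
  have hF0 : ∀ x : ℝ, 0 ≤ F x := fun x =>
    le_of_tendsto hbot (eventually_atBot.2 ⟨x, fun y hy => hmono hy⟩)
  have hF1 : ∀ x : ℝ, F x ≤ 1 := fun x =>
    ge_of_tendsto htop (eventually_atTop.2 ⟨x, fun y hy => hmono hy⟩)
  -- nonempty and bddBelow of the sets
  have hne : ∀ u : ℝ, u < 1 → {y : ℝ | u ≤ F y}.Nonempty := by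
    intro u hu
    rcases (htop.eventually_const_le hu).exists with ⟨b, hb⟩
    exact ⟨b, hb⟩
  have hbdd : ∀ u : ℝ, 0 < u → BddBelow {y : ℝ | u ≤ F y} := by
    intro u hu
    rcases (hbot.eventually_lt_const hu).exists with ⟨a, ha⟩
    refine ⟨a, fun y hy => ?_⟩
    by_contra h
    push_neg at h
    exact absurd (le_trans hy (hmono h.le)) (not_le.2 ha)
  -- key equivalence
  have key : ∀ x : ℝ, ∀ u ∈ Set.Ioo (0 : ℝ) 1, (Fdag u ≤ x ↔ u ≤ F x) := by
    intro x u hu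
    rw [hFdag u hu]
    constructor
    · intro h
      -- u ≤ F y' for all y' > x, use right continuity
      have hforall : ∀ y' ∈ Set.Ioi x, u ≤ F y' := by
        intro y' hy'
        obtain ⟨y, hyS, hyy'⟩ := (csInf_lt_iff (hbdd u hu.1) (hne u hu.2)).1
          (lt_of_le_of_lt h hy')
        exact le_trans hyS (hmono hyy'.le)
      have htend : Tendsto F (𝓝[>] x) (𝓝 (F x)) :=
        (hrc x).tendsto.mono_left (nhdsWithin_mono x Ioi_subset_Ici_self)
      exact ge_of_tendsto htend (eventually_nhdsWithin_of_forall hforall)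
    · intro h
      exact csInf_le (hbdd u hu.1) h
  intro x
  -- AEMeasurable
  have hmonoOn : MonotoneOn Fdag (Set.Ioo (0 : ℝ) 1) := by
    intro u hu v hv huv
    rw [hFdag u hu, hFdag v hv]
    exact csInf_le_csInf (hbdd u hu.1) (hne v hv.2)
      (fun y hy => le_trans huv hy)
  have haem : AEMeasurable Fdag (volume.restrict (Set.Ioo (0 : ℝ) 1)) :=
    aemeasurable_restrict_of_monotoneOn measurableSet_Ioo hmonoOn
  rw [Measure.map_apply_of_aemeasurable haem measurableSet_Iic,
    Measure.restrict_apply' measurableSet_Ioo]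
  have hset : Fdag ⁻¹' Set.Iic x ∩ Set.Ioo 0 1 = Set.Iic (F x) ∩ Set.Ioo 0 1 := by
    ext u
    simp only [Set.mem_inter_iff, Set.mem_preimage, Set.mem_Iic]
    constructor
    · rintro ⟨h1, h2⟩; exact ⟨(key x u h2).1 h1, h2⟩
    · rintro ⟨h1, h2⟩; exact ⟨(key x u h2).2 h1, h2⟩
  rw [hset]
  rcases eq_or_lt_of_le (hF1 x) with h1 | h1
  · have : Set.Iic (F x) ∩ Set.Ioo 0 1 = Set.Ioo (0 : ℝ) 1 := by
      apply Set.inter_eq_self_of_subset_right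
      intro u hu
      simp only [Set.mem_Iic]
      rw [← h1] at hu
      exact hu.2.le
    rw [this, Real.volume_Ioo, ← h1]
    norm_num
  · have : Set.Iic (F x) ∩ Set.Ioo 0 1 = Set.Ioc (0 : ℝ) (F x) := by
      ext u
      simp only [Set.mem_inter_iff, Set.mem_Iic, Set.mem_Ioo, Set.mem_Ioc]
      constructor
      · rintro ⟨h2, h3, _⟩; exact ⟨h3, h2⟩
      · rintro ⟨h2, h3⟩; exact ⟨h3, h2, lt_of_le_of_lt h3 h1⟩
    rw [this, Real.volume_Ioc, sub_zero]
end
end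

section
/- Bias theorem: in the imprecise Monte Carlo setting, assume −∞ < E̲^∞(inf_{t∈T} f_t(X₁^P)). Then for every integer n ≥ 2: E̲^∞(Ê̲_{n−1}^𝒫(f)) ≤ E̲^∞(Ê̲_n^𝒫(f)) ≤ Ē^∞(Ê̲_n^𝒫(f)) ≤ E̲^𝒫(f). In particular the bias of the estimator (with respect to either inner or outer expectation) is non-positive, and the inner-expectation bias is non-decreasing in the sample size n. -/
open MeasureTheory Filter Topology ProbabilityTheory
open scoped ENNReal

noncomputable section

/-- The positive part of an extended real number, as an element of `ℝ≥0∞`. -/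
def epos (x : EReal) : ℝ≥0∞ := if x = ⊤ then ⊤ else ENNReal.ofReal x.toReal

/-- The (possibly infinite) expectation `E(g) = ∫ g⁺ − ∫ g⁻` of an extended-real map. -/
def eExp {Ω : Type*} [MeasurableSpace Ω] (μ : Measure Ω) (g : Ω → EReal) : EReal :=
  ((∫⁻ ω, epos (g ω) ∂μ : ℝ≥0∞) : EReal) - ((∫⁻ ω, epos (-(g ω)) ∂μ : ℝ≥0∞) : EReal)

/-- `E(g)` exists: at least one of `E(g⁺)`, `E(g⁻)` is finite. -/
def eExpExists {Ω : Type*} [MeasurableSpace Ω] (μ : Measure Ω) (g : Ω → EReal) : Prop :=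
  (∫⁻ ω, epos (g ω) ∂μ) ≠ ⊤ ∨ (∫⁻ ω, epos (-(g ω)) ∂μ) ≠ ⊤

/-- Outer expectation of an arbitrary extended-real map: the infimum of `E(g)` over all
measurable `g ≥ h` whose expectation exists. -/
def outerExp {Ω : Type*} [MeasurableSpace Ω] (μ : Measure Ω) (h : Ω → EReal) : EReal :=
  sInf {y : EReal | ∃ g : Ω → EReal,
    Measurable g ∧ (∀ ω, h ω ≤ g ω) ∧ eExpExists μ g ∧ eExp μ g = y}

/-- Inner expectation of an arbitrary extended-real map. -/
def innerExp {Ω : Type*} [MeasurableSpace Ω] (μ : Measure Ω) (h : Ω → EReal) : EReal :=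
  - outerExp μ (fun ω => - h ω)

/-- `g` is a minimal measurable cover of `h` w.r.t. `μ`: it is measurable, dominates `h`
pointwise, and is a.s. below any measurable map dominating `h` pointwise. -/
def IsMinMeasCover {Ω : Type*} [MeasurableSpace Ω] (μ : Measure Ω) (h g : Ω → EReal) : Prop :=
  Measurable g ∧ (∀ ω, h ω ≤ g ω) ∧
    ∀ g' : Ω → EReal, Measurable g' → (∀ ω, h ω ≤ g' ω) → ∀ᵐ ω ∂μ, g ω ≤ g' ω

/-- Absolute value on extended reals. -/
def eabs (x : EReal) : EReal := max x (-x)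

/-!
Write `Ŝₙ` for the estimator and `Sₙᵗ` for the sample mean of `f_t`. Deleting the `j`-th
observation and averaging over `j` reproduces the sample mean, `Sₙᵗ = n⁻¹ ∑ⱼ Sₙ₋₁ᵗ(ω without ωⱼ)`,
so `-Ŝₙ(ω) ≤ n⁻¹ ∑ⱼ (-Ŝₙ₋₁)(ω without ωⱼ)`. For an i.i.d. sequence deleting a coordinate
preserves the law, so the average of the translates of a measurable cover of `-Ŝₙ₋₁` is a
measurable cover of `-Ŝₙ` (up to a null set) with the same expectation; this gives the
monotonicity of the inner expectation. The upper bound holds because `Ŝₙ ≤ Sₙᵗ` and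
`E(Sₙᵗ) = E^P(f_t) = E^{P_t}(f)`.
-/

open Finset

@[simp] lemma epos_coe (x : ℝ) : epos x = ENNReal.ofReal x := by simp [epos]

@[simp] lemma epos_neg_coe (x : ℝ) : epos (-x) = ENNReal.ofReal (-x) := by
  rw [← EReal.coe_neg, epos_coe]

lemma epos_mono : Monotone epos := by
  intro x y h
  induction y using EReal.rec with
  | bot => rw [le_bot_iff.1 h]
  | top => simp [epos]
  | coe y =>
    induction x using EReal.rec with
    | bot => simp [epos]
    | top => simp at h
    | coe x => simpa using ENNReal.ofReal_le_ofReal (EReal.coe_le_coe_iff.1 h)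

lemma measurable_epos : Measurable epos :=
  Measurable.ite (measurableSet_singleton _) measurable_const
    (ENNReal.measurable_ofReal.comp measurable_ereal_toReal)

lemma EReal.coe_ennreal_sub_eq_of_add_eq {x y z w : ℝ≥0∞} (hx : x ≠ ⊤) (hz : z ≠ ⊤)
    (h : x + w = y + z) : (x : EReal) - y = z - w := by
  rcases eq_or_ne w ⊤ with rfl | hw
  · have hy : y = ⊤ := by simpa [hz] using h.symm
    simp [hy]
  · have hy : y ≠ ⊤ := by
      intro hy; simp [hy, hx, hw] at h
    have h' := congrArg ENNReal.toReal h
    rw [ENNReal.toReal_add hx hw, ENNReal.toReal_add hy hz] at h'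
    rw [← EReal.coe_ennreal_toReal hx, ← EReal.coe_ennreal_toReal hy,
      ← EReal.coe_ennreal_toReal hz, ← EReal.coe_ennreal_toReal hw, ← EReal.coe_sub,
      ← EReal.coe_sub, EReal.coe_eq_coe_iff]
    linarith

lemma MeasureTheory.Integrable.lintegral_ofReal_ne_top {Ω : Type*} [MeasurableSpace Ω]
    {μ : Measure Ω} {u : Ω → ℝ} (hu : Integrable u μ) : ∫⁻ ω, ENNReal.ofReal (u ω) ∂μ ≠ ⊤ :=
  ne_top_of_le_ne_top hu.hasFiniteIntegral.ne (lintegral_ofReal_le_lintegral_enorm u)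

section Expectation

variable {Ω : Type*} [MeasurableSpace Ω] {μ : Measure Ω}

lemma eExp_mono {g g' : Ω → EReal} (h : ∀ ω, g ω ≤ g' ω) : eExp μ g ≤ eExp μ g' :=
  EReal.sub_le_sub
    (EReal.coe_ennreal_le_coe_ennreal_iff.2 (lintegral_mono fun ω => epos_mono (h ω)))
    (EReal.coe_ennreal_le_coe_ennreal_iff.2
      (lintegral_mono fun ω => epos_mono (EReal.neg_le_neg_iff.2 (h ω))))

lemma eExp_neg {g : Ω → EReal} (h : eExpExists μ g) :
    eExp μ (fun ω => -g ω) = -eExp μ g := by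
  simp only [eExp, neg_neg]
  rw [EReal.neg_sub (Or.inl (by simp)) (by simpa [eExpExists, or_comm] using h),
    add_comm, sub_eq_add_neg]

lemma innerExp_le_outerExp (h : Ω → EReal) : innerExp μ h ≤ outerExp μ h := by
  refine le_sInf ?_
  rintro _ ⟨g, -, hhg, hex, rfl⟩
  rw [innerExp, EReal.neg_le]
  refine le_sInf ?_
  rintro _ ⟨g', -, hhg', -, rfl⟩
  rw [← eExp_neg hex]
  exact eExp_mono fun ω => (EReal.neg_le_neg_iff.2 (hhg ω)).trans (hhg' ω)

lemma lintegral_epos_congr_ae {g g' : Ω → EReal} (h : g =ᵐ[μ] g') (φ : EReal → EReal) :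
    ∫⁻ ω, epos (φ (g ω)) ∂μ = ∫⁻ ω, epos (φ (g' ω)) ∂μ :=
  lintegral_congr_ae (h.mono fun ω hω => by simp only [hω])

lemma eExp_congr_ae {g g' : Ω → EReal} (h : g =ᵐ[μ] g') : eExp μ g = eExp μ g' := by
  rw [eExp, eExp, lintegral_epos_congr_ae h fun x => x, lintegral_epos_congr_ae h Neg.neg]

lemma eExpExists_congr_ae {g g' : Ω → EReal} (h : g =ᵐ[μ] g') :
    eExpExists μ g ↔ eExpExists μ g' := by
  rw [eExpExists, eExpExists, lintegral_epos_congr_ae h fun x => x,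
    lintegral_epos_congr_ae h Neg.neg]

lemma outerExp_le_eExp_of_ae_le {h g : Ω → EReal} (hg : Measurable g) (hex : eExpExists μ g)
    (hle : ∀ᵐ ω ∂μ, h ω ≤ g ω) : outerExp μ h ≤ eExp μ g := by
  classical
  set N := toMeasurable μ {ω | ¬h ω ≤ g ω}
  have hN : μ N = 0 := by rwa [measure_toMeasurable, ← ae_iff]
  have hG : N.piecewise (fun _ => ⊤) g =ᵐ[μ] g :=
    (measure_eq_zero_iff_ae_notMem.1 hN).mono fun ω hω => Set.piecewise_eq_of_notMem _ _ _ hω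
  refine sInf_le ⟨N.piecewise (fun _ => ⊤) g,
    measurable_const.piecewise (measurableSet_toMeasurable _ _) hg, fun ω => ?_,
    (eExpExists_congr_ae hG).2 hex, eExp_congr_ae hG⟩
  by_cases hω : ω ∈ N
  · simp [hω]
  · rw [Set.piecewise_eq_of_notMem _ _ _ hω]
    by_contra hlt
    exact hω (subset_toMeasurable _ _ hlt)

lemma eExpExists_coe {u : Ω → ℝ} (hu : Integrable u μ) :
    eExpExists μ (fun ω => (u ω : EReal)) :=
  Or.inl (by simpa using hu.lintegral_ofReal_ne_top)

lemma eExp_coe {u : Ω → ℝ} (hu : Integrable u μ) :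
    eExp μ (fun ω => (u ω : EReal)) = (∫ ω, u ω ∂μ : ℝ) := by
  simp only [eExp, epos_coe, epos_neg_coe]
  rw [← EReal.coe_ennreal_toReal hu.lintegral_ofReal_ne_top,
    ← EReal.coe_ennreal_toReal (hu.neg.lintegral_ofReal_ne_top (u := fun ω => -u ω)),
    ← EReal.coe_sub, integral_eq_lintegral_pos_part_sub_lintegral_neg_part hu]

end Expectation

section Averaging

variable {Ω : Type*} [MeasurableSpace Ω] {μ : Measure Ω}

lemma eExp_coe_sub {a b : Ω → ℝ} (ha : Measurable a) (hb : Measurable b) (ha₀ : ∀ ω, 0 ≤ a ω)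
    (hb₀ : ∀ ω, 0 ≤ b ω) (hfin : ∫⁻ ω, ENNReal.ofReal (a ω) ∂μ ≠ ⊤) :
    eExpExists μ (fun ω => ((a ω - b ω : ℝ) : EReal)) ∧
      eExp μ (fun ω => ((a ω - b ω : ℝ) : EReal)) =
        (∫⁻ ω, ENNReal.ofReal (a ω) ∂μ : EReal) - (∫⁻ ω, ENNReal.ofReal (b ω) ∂μ : EReal) := by
  simp only [eExpExists, eExp, epos_coe, epos_neg_coe, neg_sub]
  have hle : ∫⁻ ω, ENNReal.ofReal (a ω - b ω) ∂μ ≤ ∫⁻ ω, ENNReal.ofReal (a ω) ∂μ :=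
    lintegral_mono fun ω => ENNReal.ofReal_le_ofReal (by linarith [hb₀ ω])
  have hpt : ∀ ω, ENNReal.ofReal (a ω - b ω) + ENNReal.ofReal (b ω) =
      ENNReal.ofReal (b ω - a ω) + ENNReal.ofReal (a ω) := by
    intro ω
    rcases le_total (b ω) (a ω) with h | h
    · rw [ENNReal.ofReal_of_nonpos (sub_nonpos.2 h), zero_add,
        ← ENNReal.ofReal_add (sub_nonneg.2 h) (hb₀ ω), sub_add_cancel]
    · rw [ENNReal.ofReal_of_nonpos (sub_nonpos.2 h), zero_add,
        ← ENNReal.ofReal_add (sub_nonneg.2 h) (ha₀ ω), sub_add_cancel]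
  have hsum := lintegral_congr (μ := μ) hpt
  rw [lintegral_add_right _ hb.ennreal_ofReal, lintegral_add_right _ ha.ennreal_ofReal] at hsum
  exact ⟨Or.inl (ne_top_of_le_ne_top hfin hle),
    EReal.coe_ennreal_sub_eq_of_add_eq (ne_top_of_le_ne_top hfin hle) hfin hsum⟩

variable {ι : Type*} {s : Finset ι} {φ : ι → Ω → Ω}

lemma lintegral_ofReal_average_comp (hs : s.Nonempty) (hφ : ∀ j ∈ s, MeasurePreserving (φ j) μ μ)
    {p : Ω → ℝ} (hp : Measurable p) (hp₀ : ∀ ω, 0 ≤ p ω) :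
    ∫⁻ ω, ENNReal.ofReal ((#s : ℝ)⁻¹ * ∑ j ∈ s, p (φ j ω)) ∂μ =
      ∫⁻ ω, ENNReal.ofReal (p ω) ∂μ := by
  have hcomp : ∀ j ∈ s, ∫⁻ ω, ENNReal.ofReal (p (φ j ω)) ∂μ = ∫⁻ ω, ENNReal.ofReal (p ω) ∂μ :=
    fun j hj => (hφ j hj).lintegral_comp (ENNReal.measurable_ofReal.comp hp)
  have hcard : ENNReal.ofReal (#s : ℝ)⁻¹ * #s = 1 := by
    rw [ENNReal.ofReal_inv_of_pos (by exact_mod_cast hs.card_pos), ENNReal.ofReal_natCast,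
      ENNReal.inv_mul_cancel (by simp [hs.ne_empty]) (by simp)]
  calc ∫⁻ ω, ENNReal.ofReal ((#s : ℝ)⁻¹ * ∑ j ∈ s, p (φ j ω)) ∂μ
      = ∫⁻ ω, ENNReal.ofReal (#s : ℝ)⁻¹ * ∑ j ∈ s, ENNReal.ofReal (p (φ j ω)) ∂μ := by
        refine lintegral_congr fun ω => ?_
        rw [ENNReal.ofReal_mul (by positivity), ENNReal.ofReal_sum_of_nonneg fun j _ => hp₀ _]
    _ = ENNReal.ofReal (#s : ℝ)⁻¹ * ∑ j ∈ s, ∫⁻ ω, ENNReal.ofReal (p (φ j ω)) ∂μ := by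
        rw [lintegral_const_mul' _ _ ENNReal.ofReal_ne_top, lintegral_finsetSum _ fun j hj => by
          have := (hφ j hj).measurable; fun_prop]
    _ = ∫⁻ ω, ENNReal.ofReal (p ω) ∂μ := by
        rw [sum_congr rfl hcomp, sum_const, nsmul_eq_mul, ← mul_assoc, hcard, one_mul]

lemma eExp_coe_average_comp (hs : s.Nonempty) (hφ : ∀ j ∈ s, MeasurePreserving (φ j) μ μ)
    {r : Ω → ℝ} (hr : Measurable r) (hfin : ∫⁻ ω, ENNReal.ofReal (r ω) ∂μ ≠ ⊤) :
    eExpExists μ (fun ω => (((#s : ℝ)⁻¹ * ∑ j ∈ s, r (φ j ω) : ℝ) : EReal)) ∧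
      eExp μ (fun ω => (((#s : ℝ)⁻¹ * ∑ j ∈ s, r (φ j ω) : ℝ) : EReal)) =
        eExp μ (fun ω => (r ω : EReal)) := by
  have hsplit : ∀ ω, (#s : ℝ)⁻¹ * ∑ j ∈ s, r (φ j ω) =
      (#s : ℝ)⁻¹ * ∑ j ∈ s, max (r (φ j ω)) 0 - (#s : ℝ)⁻¹ * ∑ j ∈ s, max (-r (φ j ω)) 0 := by
    intro ω
    simp only [← mul_sub, ← sum_sub_distrib, max_zero_sub_max_neg_zero_eq_self]
  have hpos := lintegral_ofReal_average_comp hs hφ (hr.max measurable_const)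
    fun ω => le_max_right (r ω) 0
  have hneg := lintegral_ofReal_average_comp hs hφ (hr.neg.max measurable_const)
    fun ω => le_max_right (-r ω) 0
  have hmeas : ∀ q : Ω → ℝ, Measurable q →
      Measurable fun ω => (#s : ℝ)⁻¹ * ∑ j ∈ s, max (q (φ j ω)) 0 := fun q hq =>
    (Finset.measurable_sum _ fun j hj =>
      (hq.comp (hφ j hj).measurable).max measurable_const).const_mul _
  simp only [hsplit]
  obtain ⟨hex, heq⟩ := eExp_coe_sub (μ := μ) (hmeas r hr) (hmeas _ hr.neg)
    (fun ω => by positivity) (fun ω => by positivity) (by rw [hpos]; simpa using hfin)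
  refine ⟨hex, heq.trans ?_⟩
  rw [hpos, hneg]
  simp [eExp]

/-- `hle` says `h ω ≤ #s⁻¹ ∑ⱼ h' (φ j ω)`, phrased through real upper bounds `x j` of the
`h' (φ j ω)` to avoid arithmetic in `EReal`. -/
theorem outerExp_le_outerExp_of_le_average (hs : s.Nonempty)
    (hφ : ∀ j ∈ s, MeasurePreserving (φ j) μ μ) {h h' : Ω → EReal} (hbot : ∀ ω, h' ω ≠ ⊥)
    (hle : ∀ ω (x : ι → ℝ), (∀ j ∈ s, h' (φ j ω) ≤ x j) →
      h ω ≤ (((#s : ℝ)⁻¹ * ∑ j ∈ s, x j : ℝ) : EReal)) :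
    outerExp μ h ≤ outerExp μ h' := by
  refine le_sInf ?_
  rintro _ ⟨g, hg, hh'g, hex, rfl⟩
  by_cases hpos : ∫⁻ ω, epos (g ω) ∂μ = ⊤
  · have hneg : ∫⁻ ω, epos (-g ω) ∂μ ≠ ⊤ := hex.resolve_left (not_not.2 hpos)
    rw [eExp, hpos, ← EReal.coe_ennreal_toReal hneg, EReal.coe_ennreal_top, EReal.top_sub_coe]
    exact le_top
  set r : Ω → ℝ := fun ω => (g ω).toReal
  have hr : Measurable r := measurable_ereal_toReal.comp hg
  have hgr : g =ᵐ[μ] fun ω => (r ω : EReal) :=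
    (ae_lt_top (measurable_epos.comp hg) hpos).mono fun ω hω =>
      (EReal.coe_toReal (fun h => by simp [h, epos] at hω)
        (ne_bot_of_le_ne_bot (hbot ω) (hh'g ω))).symm
  have hfin : ∫⁻ ω, ENNReal.ofReal (r ω) ∂μ ≠ ⊤ := by
    simpa [lintegral_epos_congr_ae hgr fun x => x] using hpos
  obtain ⟨hex', heq⟩ := eExp_coe_average_comp hs hφ hr hfin
  rw [eExp_congr_ae hgr, ← heq]
  refine outerExp_le_eExp_of_ae_le ?_ hex' ?_
  · exact measurable_coe_real_ereal.comp ((Finset.measurable_sum _ fun j hj =>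
      hr.comp (hφ j hj).measurable).const_mul _)
  have hgφ : ∀ᵐ ω ∂μ, ∀ j ∈ s, g (φ j ω) = r (φ j ω) :=
    (eventually_all_finset s).2 fun j hj => (hφ j hj).quasiMeasurePreserving.ae hgr
  filter_upwards [hgφ] with ω hω
  exact hle ω (fun j => r (φ j ω)) fun j hj => (hh'g _).trans (hω j hj).le

end Averaging

def skip (j k : ℕ) : ℕ := if k < j then k else k + 1

lemma skip_injective (j : ℕ) : Function.Injective (skip j) := by
  intro a b hab
  simp only [skip] at hab
  split_ifs at hab <;> omega

lemma sum_range_skip {M : Type*} [AddCommGroup M] (a : ℕ → M) {j n : ℕ} (hj : j ≤ n) :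
    ∑ k ∈ range n, a (skip j k) = ∑ k ∈ range (n + 1), a k - a j := by
  induction n, hj using Nat.le_induction with
  | base =>
    rw [sum_range_succ, add_sub_cancel_right]
    exact sum_congr rfl fun k hk => by simp [skip, mem_range.1 hk]
  | succ n hjn ih =>
    rw [sum_range_succ, ih, sum_range_succ _ (n + 1), skip, if_neg (by omega)]
    abel

def sampleMean (a : ℕ → ℝ) (n : ℕ) : ℝ := (n : ℝ)⁻¹ * ∑ k ∈ range n, a k

lemma sampleMean_succ_eq_average_skip (a : ℕ → ℝ) {n : ℕ} (hn : n ≠ 0) :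
    sampleMean a (n + 1) =
      ((n + 1 : ℕ) : ℝ)⁻¹ * ∑ j ∈ range (n + 1), sampleMean (fun k => a (skip j k)) n := by
  have hsum : ∑ j ∈ range (n + 1), sampleMean (fun k => a (skip j k)) n =
      ∑ k ∈ range (n + 1), a k := by
    simp only [sampleMean, ← mul_sum]
    rw [sum_congr rfl fun j hj => sum_range_skip a (Nat.lt_succ_iff.1 (mem_range.1 hj)),
      sum_sub_distrib, sum_const, card_range, nsmul_eq_mul]
    field_simp
    push_cast
    ring
  rw [hsum, sampleMean]

def lowerEstimator {T : Type*} (ft : T → ℝ → ℝ) (n : ℕ) (ω : ℕ → ℝ) : EReal :=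
  ⨅ t, (sampleMean (fun k => ft t (ω k)) n : EReal)

section Estimator

variable {T : Type*} {ft : T → ℝ → ℝ}

lemma lowerEstimator_ne_top [Nonempty T] (n : ℕ) (ω : ℕ → ℝ) : lowerEstimator ft n ω ≠ ⊤ :=
  ne_top_of_le_ne_top (EReal.coe_ne_top _) (iInf_le _ (Classical.arbitrary T))

lemma neg_lowerEstimator_le_average {n : ℕ} (hn : n ≠ 0) (ω : ℕ → ℝ) (x : ℕ → ℝ)
    (hx : ∀ j ∈ range (n + 1), -lowerEstimator ft n (fun k => ω (skip j k)) ≤ x j) :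
    -lowerEstimator ft (n + 1) ω ≤
      ((((n + 1 : ℕ) : ℝ)⁻¹ * ∑ j ∈ range (n + 1), x j : ℝ) : EReal) := by
  rw [EReal.neg_le, ← EReal.coe_neg]
  refine le_iInf fun t => ?_
  rw [EReal.coe_le_coe_iff, sampleMean_succ_eq_average_skip _ hn, ← mul_neg, ← sum_neg_distrib]
  gcongr with j hj
  exact_mod_cast (EReal.neg_le.1 (hx j hj)).trans (iInf_le _ t)

end Estimator

theorem measurePreserving_comp_of_iIndepFun {ι E : Type*} [MeasurableSpace E]
    {μ : Measure (ι → E)} {P : Measure E}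
    (hmap : ∀ i, μ.map (fun ω => ω i) = P) (hind : iIndepFun (fun i (ω : ι → E) => ω i) μ)
    {σ : ι → ι} (hσ : Function.Injective σ) :
    MeasurePreserving (fun ω i => ω (σ i)) μ μ := by
  refine ⟨measurable_pi_lambda _ fun i => measurable_pi_apply _, ?_⟩
  have hσ := (hind.precomp hσ).map_fun_eq_infinitePi_map fun i => measurable_pi_apply _
  have hid := hind.map_fun_eq_infinitePi_map fun i => measurable_pi_apply _
  simp only [hmap] at hσ hid
  rw [hσ, ← hid, Measure.map_id']

lemma integral_sampleMean {Ω E : Type*} [MeasurableSpace Ω] [MeasurableSpace E] {μ : Measure Ω}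
    {P : Measure E} {X : ℕ → Ω → E} (hX : ∀ k, MeasurePreserving (X k) μ P) {F : E → ℝ}
    (hF : Integrable F P) {n : ℕ} (hn : n ≠ 0) :
    Integrable (fun ω => sampleMean (fun k => F (X k ω)) n) μ ∧
      ∫ ω, sampleMean (fun k => F (X k ω)) n ∂μ = ∫ x, F x ∂P := by
  have hint : ∀ k, Integrable (fun ω => F (X k ω)) μ :=
    fun k => (hX k).integrable_comp_of_integrable hF
  have hcomp : ∀ k, ∫ ω, F (X k ω) ∂μ = ∫ x, F x ∂P :=
    fun k => (hX k).hasLaw.integral_comp hF.aestronglyMeasurable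
  refine ⟨(integrable_finsetSum _ fun k _ => hint k).const_mul _, ?_⟩
  simp only [sampleMean]
  rw [integral_const_mul, integral_finsetSum _ fun k _ => hint k,
    sum_congr rfl fun k _ => hcomp k, sum_const,
    card_range, nsmul_eq_mul, inv_mul_cancel_left₀ (Nat.cast_ne_zero.2 hn)]

section IID

variable {μ : Measure (ℕ → ℝ)} {P : Measure ℝ} {T : Type*} {ft : T → ℝ → ℝ}

theorem innerExp_lowerEstimator_pred_le [Nonempty T] (hmap : ∀ k, μ.map (fun ω => ω k) = P)
    (hind : iIndepFun (fun k (ω : ℕ → ℝ) => ω k) μ) {n : ℕ} (hn : 2 ≤ n) :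
    innerExp μ (lowerEstimator ft (n - 1)) ≤ innerExp μ (lowerEstimator ft n) := by
  obtain ⟨m, rfl⟩ : ∃ m, n = m + 1 := ⟨n - 1, by omega⟩
  rw [Nat.add_sub_cancel, innerExp, innerExp, EReal.neg_le_neg_iff]
  refine outerExp_le_outerExp_of_le_average (nonempty_range_add_one (n := m))
    (fun j _ => measurePreserving_comp_of_iIndepFun hmap hind (skip_injective j))
    (fun ω => by simpa using lowerEstimator_ne_top m ω) fun ω x hx => ?_
  rw [card_range]
  exact neg_lowerEstimator_le_average (by omega) ω x hx

theorem outerExp_lowerEstimator_le (hmap : ∀ k, μ.map (fun ω => ω k) = P)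
    (hftm : ∀ t, Measurable (ft t)) (hfti : ∀ t, Integrable (ft t) P) {n : ℕ} (hn : n ≠ 0) :
    outerExp μ (lowerEstimator ft n) ≤ ⨅ t, ((∫ x, ft t x ∂P : ℝ) : EReal) := by
  refine le_iInf fun t => ?_
  obtain ⟨hint, heq⟩ := integral_sampleMean (fun k => ⟨measurable_pi_apply k, hmap k⟩)
    (hfti t) hn
  have hmeas : Measurable fun ω : ℕ → ℝ => sampleMean (fun k => ft t (ω k)) n :=
    (Finset.measurable_sum _ fun k _ => (hftm t).comp (measurable_pi_apply k)).const_mul _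
  calc outerExp μ (lowerEstimator ft n)
      ≤ eExp μ (fun ω => (sampleMean (fun k => ft t (ω k)) n : EReal)) :=
        outerExp_le_eExp_of_ae_le (measurable_coe_real_ereal.comp hmeas) (eExpExists_coe hint)
          (ae_of_all _ fun ω => iInf_le _ t)
    _ = ((∫ x, ft t x ∂P : ℝ) : EReal) := by rw [eExp_coe hint, heq]

end IID

theorem bias_of_imprecise_monte_carlo_general
    {T : Type*} [Nonempty T]
    (Pt : T → Measure ℝ)
    (P : Measure ℝ)
    (f : ℝ → ℝ)
    (ft : T → ℝ → ℝ)
    (hftm : ∀ t, Measurable (ft t)) (hfti : ∀ t, Integrable (ft t) P)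
    (hfte : ∀ t, ∫ x, ft t x ∂P = ∫ x, f x ∂(Pt t))
    -- the i.i.d. sample `X₁, X₂, …` with distribution `P`, on the product space
    (μ : Measure (ℕ → ℝ))
    (hmap : ∀ k : ℕ, μ.map (fun ω => ω k) = P)
    (hind : iIndepFun (m := fun _ : ℕ => (inferInstance : MeasurableSpace ℝ))
      (fun k (ω : ℕ → ℝ) => ω k) μ) :
    ∀ n : ℕ, 2 ≤ n →
      innerExp μ
          (fun ω => ⨅ t : T, ((((n - 1 : ℕ) : ℝ)⁻¹ *
            ∑ k ∈ Finset.range (n - 1), ft t (ω k) : ℝ) : EReal)) ≤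
        innerExp μ
          (fun ω => ⨅ t : T, (((n : ℝ)⁻¹ * ∑ k ∈ Finset.range n, ft t (ω k) : ℝ) : EReal)) ∧
      innerExp μ
          (fun ω => ⨅ t : T, (((n : ℝ)⁻¹ * ∑ k ∈ Finset.range n, ft t (ω k) : ℝ) : EReal)) ≤
        outerExp μ
          (fun ω => ⨅ t : T, (((n : ℝ)⁻¹ * ∑ k ∈ Finset.range n, ft t (ω k) : ℝ) : EReal)) ∧
      outerExp μ
          (fun ω => ⨅ t : T, (((n : ℝ)⁻¹ * ∑ k ∈ Finset.range n, ft t (ω k) : ℝ) : EReal)) ≤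
        ⨅ t : T, ((∫ x, f x ∂(Pt t) : ℝ) : EReal) := by
  intro n hn
  refine ⟨innerExp_lowerEstimator_pred_le hmap hind hn, innerExp_le_outerExp _, ?_⟩
  exact (outerExp_lowerEstimator_le hmap hftm hfti (by omega)).trans_eq (by simp only [hfte])

/-- **Bias.** In the imprecise Monte Carlo setting, if
`−∞ < E̲^∞(inf_{t∈T} f_t(X₁))`, then for every `n ≥ 2`,
`E̲^∞(Ê̲_{n−1}) ≤ E̲^∞(Ê̲_n) ≤ Ē^∞(Ê̲_n) ≤ E̲^𝒫(f)`:
the bias is non-positive and the inner-expectation bias is non-decreasing in `n`. -/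
theorem bias_of_imprecise_monte_carlo
    {T : Type*} [Nonempty T]
    (Pt : T → Measure ℝ) (hPt : ∀ t, IsProbabilityMeasure (Pt t))
    (P : Measure ℝ) [IsProbabilityMeasure P]
    (f : ℝ → ℝ) (hf : Measurable f)
    (hfint : ∀ t, Integrable f (Pt t))
    (hsup : BddAbove (Set.range fun t => ∫ x, |f x| ∂(Pt t)))
    (ft : T → ℝ → ℝ)
    (hftm : ∀ t, Measurable (ft t)) (hfti : ∀ t, Integrable (ft t) P)
    (hfte : ∀ t, ∫ x, ft t x ∂P = ∫ x, f x ∂(Pt t))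
    (hftea : ∀ t, ∫ x, |ft t x| ∂P = ∫ x, |f x| ∂(Pt t))
    -- the i.i.d. sample `X₁, X₂, …` with distribution `P`, on the product space
    (μ : Measure (ℕ → ℝ)) [IsProbabilityMeasure μ]
    (hmap : ∀ k : ℕ, μ.map (fun ω => ω k) = P)
    (hind : iIndepFun (m := fun _ : ℕ => (inferInstance : MeasurableSpace ℝ))
      (fun k (ω : ℕ → ℝ) => ω k) μ)
    (hbase : (⊥ : EReal) < innerExp μ (fun ω => ⨅ t : T, ((ft t (ω 0) : ℝ) : EReal))) :
    ∀ n : ℕ, 2 ≤ n →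
      innerExp μ
          (fun ω => ⨅ t : T, ((((n - 1 : ℕ) : ℝ)⁻¹ *
            ∑ k ∈ Finset.range (n - 1), ft t (ω k) : ℝ) : EReal)) ≤
        innerExp μ
          (fun ω => ⨅ t : T, (((n : ℝ)⁻¹ * ∑ k ∈ Finset.range n, ft t (ω k) : ℝ) : EReal)) ∧
      innerExp μ
          (fun ω => ⨅ t : T, (((n : ℝ)⁻¹ * ∑ k ∈ Finset.range n, ft t (ω k) : ℝ) : EReal)) ≤
        outerExp μ
          (fun ω => ⨅ t : T, (((n : ℝ)⁻¹ * ∑ k ∈ Finset.range n, ft t (ω k) : ℝ) : EReal)) ∧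
      outerExp μ
          (fun ω => ⨅ t : T, (((n : ℝ)⁻¹ * ∑ k ∈ Finset.range n, ft t (ω k) : ℝ) : EReal)) ≤
        ⨅ t : T, ((∫ x, f x ∂(Pt t) : ℝ) : EReal) :=
  bias_of_imprecise_monte_carlo_general Pt P f ft hftm hfti hfte μ hmap hind
end
end

section
/- Consistency theorem: in the imprecise Monte Carlo setting, if the class ℱ = {f_t : t ∈ T} is a strong Glivenko–Cantelli class for the probability measure P, then the estimator Ê̲_n^𝒫(f) is a strongly consistent estimator of E̲^𝒫(f); that is, there exist minimal measurable covers |Ê̲_n^𝒫(f) − E̲^𝒫(f)|* of |Ê̲_n^𝒫(f) − E̲^𝒫(f)| such that |Ê̲_n^𝒫(f) − E̲^𝒫(f)|* → 0 P^∞-almost surely as n → ∞. -/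
open MeasureTheory Filter Topology ProbabilityTheory
open scoped ENNReal

noncomputable section

/-!
Because `E^P(f_t) = E^{P_t}(f)`, the estimator and the lower expectation are the infima over `t`
of the empirical means of the `f_t` and of their `P`-expectations. The latter are bounded below by
`-sup_t E^{P_t}|f|`, so both infima are finite whenever the uniform deviation is, and then they
differ by at most the supremum of the pointwise differences. The estimation error is thus
dominated by the uniform deviation, so its minimal measurable cover lies a.s. below the
Glivenko–Cantelli cover, which tends to `0`.

Minimal measurable covers exist on a finite measure space: for a bounded strictly increasing
`φ : EReal → ℝ≥0∞`, a measurable majorant `H` minimising `∫ φ ∘ H` is a.e. below every other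
measurable majorant `g'`, since `min H g'` has the same integral.
-/

open Set

section MinMeasCover

variable {Ω : Type*} [MeasurableSpace Ω] {μ : Measure Ω}

theorem exists_strictMono_ereal_le_one : ∃ φ : EReal → ℝ≥0∞, StrictMono φ ∧ ∀ x, φ x ≤ 1 := by
  refine ⟨fun x => ((EReal.exp x)⁻¹ + 1)⁻¹, fun x y hxy => ?_,
    fun x => ENNReal.inv_le_one.2 le_add_self⟩
  exact ENNReal.inv_lt_inv.2 (ENNReal.add_lt_add_right ENNReal.one_ne_top
    (ENNReal.inv_lt_inv.2 (EReal.exp_strictMono hxy)))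

theorem isMinMeasCover_of_forall_lintegral_le {φ : EReal → ℝ≥0∞} (hφ : StrictMono φ)
    {h H : Ω → EReal} (hHm : Measurable H) (hhH : ∀ ω, h ω ≤ H ω)
    (hfin : ∫⁻ ω, φ (H ω) ∂μ ≠ ∞)
    (hmin : ∀ g, Measurable g → (∀ ω, h ω ≤ g ω) → ∫⁻ ω, φ (H ω) ∂μ ≤ ∫⁻ ω, φ (g ω) ∂μ) :
    IsMinMeasCover μ h H := by
  refine ⟨hHm, hhH, fun g hgm hhg => ?_⟩
  have hφmin : ∀ ω, φ (min (H ω) (g ω)) ≤ φ (H ω) := fun ω => hφ.monotone (min_le_left _ _)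
  have hae := ae_eq_of_ae_le_of_lintegral_le (ae_of_all μ hφmin)
    (ne_top_of_le_ne_top hfin (lintegral_mono hφmin))
    (hφ.monotone.measurable.comp hHm).aemeasurable
    (hmin _ (hHm.min hgm) fun ω => le_min (hhH ω) (hhg ω))
  filter_upwards [hae] with ω hω
  rw [← hφ.injective hω]
  exact min_le_right _ _

theorem exists_isMinMeasCover [IsFiniteMeasure μ] (h : Ω → EReal) : ∃ H, IsMinMeasCover μ h H := by
  obtain ⟨φ, hφ, hφ_le⟩ := exists_strictMono_ereal_le_one
  set S := {c | ∃ g : Ω → EReal, Measurable g ∧ (∀ ω, h ω ≤ g ω) ∧ ∫⁻ ω, φ (g ω) ∂μ = c}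
  obtain ⟨u, -, hu, huS⟩ := exists_seq_tendsto_sInf (S := S)
    ⟨_, fun _ => ⊤, measurable_const, fun _ => le_top, rfl⟩ (OrderBot.bddBelow S)
  choose g hgm hhg hgu using huS
  refine ⟨fun ω => ⨅ n, g n ω, isMinMeasCover_of_forall_lintegral_le hφ (Measurable.iInf hgm)
    (fun ω => le_iInf fun n => hhg n ω) ?_ fun g' hg'm hhg' => ?_⟩
  · exact (((lintegral_mono fun ω => hφ_le _).trans_eq lintegral_one).trans_lt
      (measure_lt_top μ univ)).ne
  · calc ∫⁻ ω, φ (⨅ n, g n ω) ∂μ ≤ sInf S :=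
          ge_of_tendsto' hu fun n => hgu n ▸ lintegral_mono fun ω => hφ.monotone (iInf_le _ n)
      _ ≤ ∫⁻ ω, φ (g' ω) ∂μ := sInf_le ⟨g', hg'm, hhg', rfl⟩

theorem exists_isMinMeasCover_tendsto_zero_of_le [IsFiniteMeasure μ] {e d G : ℕ → Ω → EReal}
    (he : ∀ n ω, 0 ≤ e n ω) (hed : ∀ n ω, e n ω ≤ d n ω) (hG : ∀ n, IsMinMeasCover μ (d n) (G n))
    (hG_lim : ∀ᵐ ω ∂μ, Tendsto (G · ω) atTop (𝓝 0)) :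
    ∃ H : ℕ → Ω → EReal,
      (∀ n, IsMinMeasCover μ (e n) (H n)) ∧ ∀ᵐ ω ∂μ, Tendsto (H · ω) atTop (𝓝 0) := by
  choose H hH using fun n => exists_isMinMeasCover (μ := μ) (e n)
  have hHG : ∀ᵐ ω ∂μ, ∀ n, H n ω ≤ G n ω :=
    ae_all_iff.2 fun n => (hH n).2.2 _ (hG n).1 fun ω => (hed n ω).trans ((hG n).2.1 ω)
  refine ⟨H, hH, ?_⟩
  filter_upwards [hHG, hG_lim] with ω hHG_ω hG_ω
  exact tendsto_of_tendsto_of_tendsto_of_le_of_le tendsto_const_nhds hG_ω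
    (fun n => (he n ω).trans ((hH n).2.1 ω)) hHG_ω

end MinMeasCover

theorem eabs_coe (r : ℝ) : eabs (r : EReal) = ((|r| : ℝ) : EReal) := by
  rw [eabs, ← EReal.coe_neg, abs]
  exact EReal.coe_strictMono.monotone.map_max.symm

theorem eabs_nonneg (x : EReal) : 0 ≤ eabs x := by
  rcases le_total 0 x with hx | hx
  · exact le_max_of_le_left hx
  · exact le_max_of_le_right (EReal.neg_nonneg.2 hx)

theorem EReal.coe_ciInf {ι : Sort*} [Nonempty ι] {a : ι → ℝ} (ha : BddBelow (range a)) :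
    ((⨅ i, a i : ℝ) : EReal) = ⨅ i, (a i : EReal) :=
  Monotone.map_ciInf_of_continuousAt continuous_coe_real_ereal.continuousAt
    EReal.coe_strictMono.monotone ha

theorem abs_ciInf_sub_ciInf_le {ι : Sort*} [Nonempty ι] {a b : ι → ℝ} (ha : BddBelow (range a))
    (hb : BddBelow (range b)) {s : ℝ} (h : ∀ i, |a i - b i| ≤ s) :
    |(⨅ i, a i) - ⨅ i, b i| ≤ s := by
  have hab : (⨅ i, a i) - s ≤ ⨅ i, b i :=
    le_ciInf fun i => by linarith [ciInf_le ha i, (abs_le.1 (h i)).2]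
  have hba : (⨅ i, b i) - s ≤ ⨅ i, a i :=
    le_ciInf fun i => by linarith [ciInf_le hb i, (abs_le.1 (h i)).1]
  rw [abs_sub_le_iff]
  constructor <;> linarith

theorem eabs_iInf_sub_iInf_le {ι : Sort*} [Nonempty ι] (a : ι → ℝ) {b : ι → ℝ}
    (hb : BddBelow (range b)) :
    eabs ((⨅ i, (a i : EReal)) - ⨅ i, (b i : EReal)) ≤ ⨆ i, ((|a i - b i| : ℝ) : EReal) := by
  generalize hS : ⨆ i, ((|a i - b i| : ℝ) : EReal) = S
  induction S using EReal.rec with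
  | bot =>
    exact absurd (hS ▸ le_iSup _ (Classical.arbitrary ι)) (not_le.2 (EReal.bot_lt_coe _))
  | top => exact le_top
  | coe s =>
    have h : ∀ i, |a i - b i| ≤ s := fun i =>
      EReal.coe_le_coe_iff.1 (hS ▸ le_iSup (fun i => ((|a i - b i| : ℝ) : EReal)) i)
    have ha : BddBelow (range a) := by
      obtain ⟨B, hB⟩ := hb
      exact ⟨B - s, forall_mem_range.2 fun i => by
        linarith [hB (mem_range_self i), (abs_le.1 (h i)).1]⟩
    rw [← EReal.coe_ciInf ha, ← EReal.coe_ciInf hb, ← EReal.coe_sub, eabs_coe,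
      EReal.coe_le_coe_iff]
    exact abs_ciInf_sub_ciInf_le ha hb h

theorem bddBelow_range_integral_of_bddAbove_integral_abs {α ι : Type*} [MeasurableSpace α]
    {μ : ι → Measure α} {f : α → ℝ} (h : BddAbove (range fun i => ∫ x, |f x| ∂μ i)) :
    BddBelow (range fun i => ∫ x, f x ∂μ i) := by
  obtain ⟨M, hM⟩ := h
  refine ⟨-M, forall_mem_range.2 fun i => ?_⟩
  linarith [hM (mem_range_self i), abs_integral_le_integral_abs (f := f) (μ := μ i),
    neg_abs_le (∫ x, f x ∂μ i)]

theorem consistency_of_imprecise_monte_carlo_general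
    {T : Type*} [Nonempty T]
    (Pt : T → Measure ℝ)
    (P : Measure ℝ)
    (f : ℝ → ℝ)
    (hsup : BddAbove (Set.range fun t => ∫ x, |f x| ∂(Pt t)))
    (ft : T → ℝ → ℝ)
    (hfte : ∀ t, ∫ x, ft t x ∂P = ∫ x, f x ∂(Pt t))
    (μ : Measure (ℕ → ℝ)) [IsProbabilityMeasure μ]
    -- `ℱ` is a strong Glivenko–Cantelli class for `P`
    (hGC : ∃ G : ℕ → (ℕ → ℝ) → EReal,
      (∀ n : ℕ, IsMinMeasCover μ
        (fun ω => ⨆ t : T, ((|(n : ℝ)⁻¹ * ∑ k ∈ Finset.range n, ft t (ω k) -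
          ∫ x, ft t x ∂P| : ℝ) : EReal)) (G n)) ∧
      ∀ᵐ ω ∂μ, Tendsto (fun n : ℕ => G n ω) atTop (𝓝 (0 : EReal))) :
    ∃ H : ℕ → (ℕ → ℝ) → EReal,
      (∀ n : ℕ, IsMinMeasCover μ
        (fun ω => eabs ((⨅ t : T, (((n : ℝ)⁻¹ *
            ∑ k ∈ Finset.range n, ft t (ω k) : ℝ) : EReal)) -
          ⨅ t : T, ((∫ x, f x ∂(Pt t) : ℝ) : EReal))) (H n)) ∧
      ∀ᵐ ω ∂μ, Tendsto (fun n : ℕ => H n ω) atTop (𝓝 (0 : EReal)) := by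
  obtain ⟨G, hG, hG_lim⟩ := hGC
  have hb := bddBelow_range_integral_of_bddAbove_integral_abs hsup
  refine exists_isMinMeasCover_tendsto_zero_of_le (fun _ _ => eabs_nonneg _) (fun n ω => ?_)
    hG hG_lim
  simpa only [hfte] using eabs_iInf_sub_iInf_le _ hb

/-- **Consistency.** If the class `ℱ = {f_t : t ∈ T}` is a strong
Glivenko–Cantelli class for `P` (i.e. the minimal measurable covers of the uniform deviations
`sup_{t∈T} |Ê_n(f_t) − E^P(f_t)|` tend to `0` a.s.), then the estimator `Ê̲_n^𝒫(f)` is a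
strongly consistent estimator of the lower expectation `E̲^𝒫(f)`: there are minimal measurable
covers of `|Ê̲_n^𝒫(f) − E̲^𝒫(f)|` converging to `0` `P^∞`-a.s. -/
theorem consistency_of_imprecise_monte_carlo
    {T : Type*} [Nonempty T]
    (Pt : T → Measure ℝ) (hPt : ∀ t, IsProbabilityMeasure (Pt t))
    (P : Measure ℝ) [IsProbabilityMeasure P]
    (f : ℝ → ℝ) (hf : Measurable f)
    (hfint : ∀ t, Integrable f (Pt t))
    (hsup : BddAbove (Set.range fun t => ∫ x, |f x| ∂(Pt t)))
    (ft : T → ℝ → ℝ)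
    (hftm : ∀ t, Measurable (ft t)) (hfti : ∀ t, Integrable (ft t) P)
    (hfte : ∀ t, ∫ x, ft t x ∂P = ∫ x, f x ∂(Pt t))
    (hftea : ∀ t, ∫ x, |ft t x| ∂P = ∫ x, |f x| ∂(Pt t))
    (μ : Measure (ℕ → ℝ)) [IsProbabilityMeasure μ]
    (hmap : ∀ k : ℕ, μ.map (fun ω => ω k) = P)
    (hind : iIndepFun (m := fun _ : ℕ => (inferInstance : MeasurableSpace ℝ))
      (fun k (ω : ℕ → ℝ) => ω k) μ)
    -- `ℱ` is a strong Glivenko–Cantelli class for `P`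
    (hGC : ∃ G : ℕ → (ℕ → ℝ) → EReal,
      (∀ n : ℕ, IsMinMeasCover μ
        (fun ω => ⨆ t : T, ((|(n : ℝ)⁻¹ * ∑ k ∈ Finset.range n, ft t (ω k) -
          ∫ x, ft t x ∂P| : ℝ) : EReal)) (G n)) ∧
      ∀ᵐ ω ∂μ, Tendsto (fun n : ℕ => G n ω) atTop (𝓝 (0 : EReal))) :
    ∃ H : ℕ → (ℕ → ℝ) → EReal,
      (∀ n : ℕ, IsMinMeasCover μ
        (fun ω => eabs ((⨅ t : T, (((n : ℝ)⁻¹ *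
            ∑ k ∈ Finset.range n, ft t (ω k) : ℝ) : EReal)) -
          ⨅ t : T, ((∫ x, f x ∂(Pt t) : ℝ) : EReal))) (H n)) ∧
      ∀ᵐ ω ∂μ, Tendsto (fun n : ℕ => H n ω) atTop (𝓝 (0 : EReal)) :=
  consistency_of_imprecise_monte_carlo_general Pt P f hsup ft hfte μ hGC
end
end

section
/- Bracketing theorem: let Φ be a class of Borel measurable, P-integrable real maps on ℝ. Suppose that for each ε > 0 there is a finite collection Φ_ε of pairs (ℓ, u) of Borel measurable maps ℓ, u : ℝ → ℝ such that every φ ∈ Φ satisfies ℓ ≤ φ ≤ u pointwise for at least one pair (ℓ, u) ∈ Φ_ε, and every pair in Φ_ε satisfies E^P(u − ℓ) < ε. Then Φ is a strong Glivenko–Cantelli class for P. Equivalently: if the bracketing number N_[](ε, Φ, ‖·‖_{P,1}) is finite for every ε > 0, then Φ is a strong Glivenko–Cantelli class for P. -/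
/-!
Sandwich each `φ ∈ Φ` in an `ε`-bracket `[ℓ, u]` taken from a finite family. The empirical
deviation of `φ` is then at most those of `ℓ` and `u` plus `E(u − ℓ) < ε`, and by the strong law
of large numbers the deviations of the finitely many bracket endpoints tend to `0` almost surely.
Any measurable bound on the supremum also bounds its minimal measurable cover almost surely, so
the limsup of the covers is a.s. at most `ε`, for every `ε = 1/(m+1)` at once.
-/

open MeasureTheory Filter Topology ProbabilityTheory
open scoped ENNReal

noncomputable section

theorem exists_isMinMeasCover_s7 {Ω : Type*} [MeasurableSpace Ω] (μ : Measure Ω) [SFinite μ]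
    (h : Ω → EReal) : ∃ g, IsMinMeasCover μ h g := by
  classical
  let A : ℚ → Set Ω := fun q => toMeasurable μ {ω | ((q : ℝ) : EReal) < h ω}
  refine ⟨fun ω => ⨆ q : ℚ, if ω ∈ A q then ((q : ℝ) : EReal) else ⊥, ?_, ?_, ?_⟩
  · exact .iSup fun q => .ite (measurableSet_toMeasurable μ _) measurable_const measurable_const
  · intro ω
    by_contra! hlt
    obtain ⟨q, hgq, hqh⟩ := EReal.exists_rat_btwn_of_lt hlt
    have hω : ω ∈ A q := subset_toMeasurable μ _ hqh
    exact hgq.not_ge (le_iSup_of_le q (by simp [hω]))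
  · intro g' hg' hhg'
    have hnull : ∀ q : ℚ, ∀ᵐ ω ∂μ, ω ∈ A q → ((q : ℝ) : EReal) < g' ω := by
      intro q
      -- `A q` is a measurable hull, so it meets the measurable set `{g' ≤ q}` only in a null set.
      have : μ (A q ∩ {ω | g' ω ≤ ((q : ℝ) : EReal)}) = 0 := by
        rw [Measure.measure_toMeasurable_inter_of_sFinite (measurableSet_le hg' measurable_const)]
        exact measure_mono_null (fun ω hω => (hω.1.trans_le (hhg' ω)).not_ge hω.2) measure_empty
      filter_upwards [measure_eq_zero_iff_ae_notMem.1 this] with ω hω hA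
      exact not_le.1 fun hle => hω ⟨hA, hle⟩
    filter_upwards [ae_all_iff.2 hnull] with ω hω
    refine iSup_le fun q => ?_
    split_ifs with hq
    exacts [(hω q hq).le, bot_le]

theorem tendsto_of_le_of_forall_le_tendsto {α ι : Type*} [CompleteLinearOrder α]
    [TopologicalSpace α] [OrderTopology α] {l : Filter ι} [l.NeBot] {g : ι → α}
    {d : ℕ → ι → α} {ε : ℕ → α} {a : α} (hag : ∀ i, a ≤ g i) (hgd : ∀ m i, g i ≤ d m i)
    (hd : ∀ m, Tendsto (d m) l (𝓝 (ε m))) (hε : Tendsto ε atTop (𝓝 a)) :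
    Tendsto g l (𝓝 a) :=
  tendsto_of_le_liminf_of_limsup_le (le_liminf_of_le (by isBoundedDefault) (.of_forall hag))
    (ge_of_tendsto' hε fun m =>
      (limsup_le_limsup (.of_forall (hgd m))).trans_eq (hd m).limsup_eq)

section Empirical

variable {α : Type*}

def empiricalMean (n : ℕ) (f : α → ℝ) (ω : ℕ → α) : ℝ :=
  (n : ℝ)⁻¹ * ∑ k ∈ Finset.range n, f (ω k)

theorem empiricalMean_mono {f g : α → ℝ} (hfg : f ≤ g) (n : ℕ) (ω : ℕ → α) :
    empiricalMean n f ω ≤ empiricalMean n g ω :=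
  mul_le_mul_of_nonneg_left (Finset.sum_le_sum fun k _ => hfg (ω k)) (by positivity)

variable [MeasurableSpace α] {P : Measure α}

variable (P) in
def empiricalDeviation (n : ℕ) (f : α → ℝ) (ω : ℕ → α) : ℝ :=
  |empiricalMean n f ω - ∫ x, f x ∂P|

theorem empiricalDeviation_nonneg (n : ℕ) (f : α → ℝ) (ω : ℕ → α) :
    0 ≤ empiricalDeviation P n f ω :=
  abs_nonneg _

theorem measurable_empiricalDeviation {f : α → ℝ} (hf : Measurable f) (n : ℕ) :
    Measurable (empiricalDeviation P n f) :=
  (((Finset.measurable_sum _ fun k _ => hf.comp (measurable_pi_apply k)).const_mul _).sub_const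
    _).abs

theorem ae_tendsto_empiricalMean {μ : Measure (ℕ → α)} (hmap : ∀ k, μ.map (fun ω => ω k) = P)
    (hind : iIndepFun (fun k (ω : ℕ → α) => ω k) μ) {f : α → ℝ} (hf : Measurable f)
    (hfi : Integrable f P) :
    ∀ᵐ ω ∂μ, Tendsto (fun n => empiricalMean n f ω) atTop (𝓝 (∫ x, f x ∂P)) := by
  have hcoord : ∀ k, Measurable fun ω : ℕ → α => ω k := measurable_pi_apply
  have hint : Integrable (fun ω => f (ω 0)) μ := by
    rw [← hmap 0] at hfi
    exact hfi.comp_measurable (hcoord 0)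
  have hident : ∀ k, IdentDistrib (fun ω => f (ω k)) (fun ω => f (ω 0)) μ μ := fun k =>
    ⟨(hf.comp (hcoord k)).aemeasurable, (hf.comp (hcoord 0)).aemeasurable, by
      change μ.map (f ∘ fun ω => ω k) = μ.map (f ∘ fun ω => ω 0)
      rw [← Measure.map_map hf (hcoord k), ← Measure.map_map hf (hcoord 0), hmap, hmap]⟩
  have hmean : ∫ ω, f (ω 0) ∂μ = ∫ x, f x ∂P := by
    rw [← hmap 0, integral_map (hcoord 0).aemeasurable hf.aestronglyMeasurable]
  have hindep : Pairwise (Function.onFun (· ⟂ᵢ[μ] ·) fun k (ω : ℕ → α) => f (ω k)) := fun i j hij =>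
    (hind.comp (fun _ => f) fun _ => hf).indepFun hij
  filter_upwards [strong_law_ae _ hint hindep hident] with ω hω
  simpa [empiricalMean, hmean] using hω

theorem ae_tendsto_empiricalDeviation {μ : Measure (ℕ → α)}
    (hmap : ∀ k, μ.map (fun ω => ω k) = P) (hind : iIndepFun (fun k (ω : ℕ → α) => ω k) μ)
    {f : α → ℝ} (hf : Measurable f) (hfi : Integrable f P) :
    ∀ᵐ ω ∂μ, Tendsto (fun n => empiricalDeviation P n f ω) atTop (𝓝 0) := by
  filter_upwards [ae_tendsto_empiricalMean hmap hind hf hfi] with ω hω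
  simpa [empiricalDeviation] using (hω.sub_const (∫ x, f x ∂P)).abs

theorem empiricalDeviation_le_of_bracket {φ ℓ u : α → ℝ} (hℓ : Integrable ℓ P)
    (hφ : Integrable φ P) (hu : Integrable u P) (hℓφ : ℓ ≤ φ) (hφu : φ ≤ u) (n : ℕ)
    (ω : ℕ → α) :
    empiricalDeviation P n φ ω ≤
      empiricalDeviation P n ℓ ω + empiricalDeviation P n u ω + ∫ x, (u x - ℓ x) ∂P := by
  have hmeanℓ := empiricalMean_mono hℓφ n ω
  have hmeanu := empiricalMean_mono hφu n ω
  have hintℓ := integral_mono hℓ hφ hℓφ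
  have hintu := integral_mono hφ hu hφu
  rw [integral_sub hu hℓ]
  unfold empiricalDeviation
  rw [abs_le]
  constructor <;> linarith [neg_abs_le (empiricalMean n ℓ ω - ∫ x, ℓ x ∂P),
    le_abs_self (empiricalMean n u ω - ∫ x, u x ∂P),
    abs_nonneg (empiricalMean n ℓ ω - ∫ x, ℓ x ∂P), abs_nonneg (empiricalMean n u ω - ∫ x, u x ∂P)]

theorem integrable_of_mem_bracket {φ ℓ u : α → ℝ} (hφ : Integrable φ P)
    (hu : AEStronglyMeasurable u P) (huℓ : Integrable (fun x => u x - ℓ x) P) (hℓφ : ℓ ≤ φ)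
    (hφu : φ ≤ u) : Integrable ℓ P ∧ Integrable u P := by
  have huφ : Integrable (fun x => u x - φ x) P :=
    huℓ.mono (hu.sub hφ.1) (.of_forall fun x => by
      simp only [Real.norm_eq_abs]
      rw [abs_of_nonneg (sub_nonneg.2 (hφu x)),
        abs_of_nonneg (sub_nonneg.2 ((hℓφ x).trans (hφu x)))]
      linarith [hℓφ x])
  have hu' : Integrable u P := (hφ.add huφ).congr (.of_forall fun x => by simp)
  exact ⟨(hu'.sub huℓ).congr (.of_forall fun x => by simp), hu'⟩

structure IsBracketing (P : Measure α) (Φ : Set (α → ℝ)) (ε : ℝ)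
    (B : Finset ((α → ℝ) × (α → ℝ))) : Prop where
  measurable_fst : ∀ b ∈ B, Measurable b.1
  measurable_snd : ∀ b ∈ B, Measurable b.2
  integrable_fst : ∀ b ∈ B, Integrable b.1 P
  integrable_snd : ∀ b ∈ B, Integrable b.2 P
  integral_sub_lt : ∀ b ∈ B, ∫ x, (b.2 x - b.1 x) ∂P < ε
  covers : ∀ φ ∈ Φ, ∃ b ∈ B, b.1 ≤ φ ∧ φ ≤ b.2

theorem exists_isBracketing {Φ : Set (α → ℝ)} (hΦ : ∀ φ ∈ Φ, Integrable φ P) {ε : ℝ}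
    (h : ∃ B : Finset ((α → ℝ) × (α → ℝ)),
      (∀ b ∈ B, Measurable b.1 ∧ Measurable b.2 ∧
        Integrable (fun x => b.2 x - b.1 x) P ∧ ∫ x, (b.2 x - b.1 x) ∂P < ε) ∧
      ∀ φ ∈ Φ, ∃ b ∈ B, ∀ x, b.1 x ≤ φ x ∧ φ x ≤ b.2 x) :
    ∃ B, IsBracketing P Φ ε B := by
  classical
  obtain ⟨B, hB, hcover⟩ := h
  -- Brackets containing no `φ ∈ Φ` may have non-integrable endpoints; discard them.
  let B' := B.filter fun b => ∃ φ ∈ Φ, b.1 ≤ φ ∧ φ ≤ b.2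
  have hB' : ∀ b ∈ B', Integrable b.1 P ∧ Integrable b.2 P := fun b hb => by
    obtain ⟨hbB, φ, hφ, hℓφ, hφu⟩ := Finset.mem_filter.1 hb
    exact integrable_of_mem_bracket (hΦ φ hφ) (hB b hbB).2.1.aestronglyMeasurable
      (hB b hbB).2.2.1 hℓφ hφu
  have hsub : ∀ b ∈ B', b ∈ B := fun b hb => (Finset.mem_filter.1 hb).1
  refine ⟨B', fun b hb => (hB b (hsub b hb)).1, fun b hb => (hB b (hsub b hb)).2.1,
    fun b hb => (hB' b hb).1, fun b hb => (hB' b hb).2, fun b hb => (hB b (hsub b hb)).2.2.2,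
    fun φ hφ => ?_⟩
  obtain ⟨b, hbB, hb⟩ := hcover φ hφ
  exact ⟨b, Finset.mem_filter.2 ⟨hbB, φ, hφ, fun x => (hb x).1, fun x => (hb x).2⟩,
    fun x => (hb x).1, fun x => (hb x).2⟩

variable (P) in
def bracketDeviation (B : Finset ((α → ℝ) × (α → ℝ))) (n : ℕ) (ω : ℕ → α) : ℝ :=
  ∑ b ∈ B, (empiricalDeviation P n b.1 ω + empiricalDeviation P n b.2 ω)

namespace IsBracketing

variable {Φ : Set (α → ℝ)} {ε : ℝ} {B : Finset ((α → ℝ) × (α → ℝ))}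

theorem empiricalDeviation_le (hB : IsBracketing P Φ ε B) {φ : α → ℝ} (hφ : φ ∈ Φ)
    (hφi : Integrable φ P) (n : ℕ) (ω : ℕ → α) :
    empiricalDeviation P n φ ω ≤ bracketDeviation P B n ω + ε := by
  obtain ⟨b, hb, hℓφ, hφu⟩ := hB.covers φ hφ
  calc empiricalDeviation P n φ ω
      ≤ empiricalDeviation P n b.1 ω + empiricalDeviation P n b.2 ω + ∫ x, (b.2 x - b.1 x) ∂P :=
        empiricalDeviation_le_of_bracket (hB.integrable_fst b hb) hφi (hB.integrable_snd b hb)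
          hℓφ hφu n ω
    _ ≤ bracketDeviation P B n ω + ε := by
        gcongr
        · exact Finset.single_le_sum
            (f := fun b => empiricalDeviation P n b.1 ω + empiricalDeviation P n b.2 ω)
            (fun _ _ => add_nonneg (empiricalDeviation_nonneg _ _ _)
              (empiricalDeviation_nonneg _ _ _)) hb
        · exact (hB.integral_sub_lt b hb).le

theorem measurable_bracketDeviation (hB : IsBracketing P Φ ε B) (n : ℕ) :
    Measurable (bracketDeviation P B n) :=
  Finset.measurable_sum _ fun b hb =>
    (measurable_empiricalDeviation (hB.measurable_fst b hb) n).add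
      (measurable_empiricalDeviation (hB.measurable_snd b hb) n)

theorem ae_tendsto_bracketDeviation (hB : IsBracketing P Φ ε B) {μ : Measure (ℕ → α)}
    (hmap : ∀ k, μ.map (fun ω => ω k) = P) (hind : iIndepFun (fun k (ω : ℕ → α) => ω k) μ) :
    ∀ᵐ ω ∂μ, Tendsto (fun n => bracketDeviation P B n ω) atTop (𝓝 0) := by
  have h := (eventually_all_finset B).2 fun b hb =>
    (ae_tendsto_empiricalDeviation hmap hind (hB.measurable_fst b hb) (hB.integrable_fst b hb)).and
      (ae_tendsto_empiricalDeviation hmap hind (hB.measurable_snd b hb) (hB.integrable_snd b hb))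
  filter_upwards [h] with ω hω
  simpa [bracketDeviation] using tendsto_finsetSum B fun b hb => (hω b hb).1.add (hω b hb).2

end IsBracketing

end Empirical

theorem bracketing_glivenko_cantelli_general
    (P : Measure ℝ)
    (Φ : Set (ℝ → ℝ)) (hΦne : Φ.Nonempty)
    (hΦi : ∀ φ ∈ Φ, Integrable φ P)
    (hbr : ∀ ε : ℝ, 0 < ε → ∃ B : Finset ((ℝ → ℝ) × (ℝ → ℝ)),
      (∀ b ∈ B, Measurable b.1 ∧ Measurable b.2 ∧
        Integrable (fun x => b.2 x - b.1 x) P ∧ ∫ x, (b.2 x - b.1 x) ∂P < ε) ∧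
      ∀ φ ∈ Φ, ∃ b ∈ B, ∀ x, b.1 x ≤ φ x ∧ φ x ≤ b.2 x)
    (μ : Measure (ℕ → ℝ)) [IsProbabilityMeasure μ]
    (hmap : ∀ k : ℕ, μ.map (fun ω => ω k) = P)
    (hind : iIndepFun (m := fun _ : ℕ => (inferInstance : MeasurableSpace ℝ))
      (fun k (ω : ℕ → ℝ) => ω k) μ) :
    ∃ G : ℕ → (ℕ → ℝ) → EReal,
      (∀ n : ℕ, IsMinMeasCover μ
        (fun ω => ⨆ φ : Φ, ((|(n : ℝ)⁻¹ * ∑ k ∈ Finset.range n, φ.1 (ω k) -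
          ∫ x, φ.1 x ∂P| : ℝ) : EReal)) (G n)) ∧
      ∀ᵐ ω ∂μ, Tendsto (fun n : ℕ => G n ω) atTop (𝓝 (0 : EReal)) := by
  choose G hG using fun n =>
    exists_isMinMeasCover_s7 μ fun ω => ⨆ φ : Φ, ((empiricalDeviation P n φ ω : ℝ) : EReal)
  refine ⟨G, hG, ?_⟩
  choose B hB using fun m : ℕ => exists_isBracketing hΦi (hbr (1 / (m + 1)) Nat.one_div_pos_of_nat)
  have hGD : ∀ᵐ ω ∂μ, ∀ m n, G n ω ≤ ((bracketDeviation P (B m) n ω + 1 / (m + 1) : ℝ) : EReal) :=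
    ae_all_iff.2 fun m => ae_all_iff.2 fun n => (hG n).2.2 _
      (measurable_coe_real_ereal.comp (((hB m).measurable_bracketDeviation n).add_const _))
      fun ω => iSup_le fun φ =>
        EReal.coe_le_coe_iff.2 ((hB m).empiricalDeviation_le φ.2 (hΦi φ φ.2) n ω)
  have hD : ∀ᵐ ω ∂μ, ∀ m, Tendsto (fun n => bracketDeviation P (B m) n ω) atTop (𝓝 0) :=
    ae_all_iff.2 fun m => (hB m).ae_tendsto_bracketDeviation hmap hind
  obtain ⟨φ₀, hφ₀⟩ := hΦne
  filter_upwards [hGD, hD] with ω hGD hD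
  refine tendsto_of_le_of_forall_le_tendsto (fun n => ?_) hGD (fun m => ?_)
    (EReal.tendsto_coe.2 tendsto_one_div_add_atTop_nhds_zero_nat)
  · exact (le_iSup_of_le (f := fun φ : Φ => ((empiricalDeviation P n φ ω : ℝ) : EReal))
      ⟨φ₀, hφ₀⟩ (EReal.coe_nonneg.2 (empiricalDeviation_nonneg _ _ _))).trans ((hG n).2.1 ω)
  · exact EReal.tendsto_coe.2 (by simpa using (hD m).add_const (1 / ((m : ℝ) + 1)))

/-- **Bracketing.** Let `Φ` be a class of Borel measurable, `P`-integrable real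
maps on `ℝ`. If for every `ε > 0` there is a finite collection of measurable brackets
`(ℓ, u)` with `E^P(u − ℓ) < ε` covering `Φ` (every `φ ∈ Φ` satisfies `ℓ ≤ φ ≤ u` for some
bracket), then `Φ` is a strong Glivenko–Cantelli class for `P`: the minimal measurable covers
of the uniform deviations `sup_{φ∈Φ} |Ê_n^P(φ) − E^P(φ)|` converge to `0` `P^∞`-a.s. -/
theorem bracketing_glivenko_cantelli
    (P : Measure ℝ) [IsProbabilityMeasure P]
    (Φ : Set (ℝ → ℝ)) (hΦne : Φ.Nonempty)
    (hΦm : ∀ φ ∈ Φ, Measurable φ) (hΦi : ∀ φ ∈ Φ, Integrable φ P)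
    (hbr : ∀ ε : ℝ, 0 < ε → ∃ B : Finset ((ℝ → ℝ) × (ℝ → ℝ)),
      (∀ b ∈ B, Measurable b.1 ∧ Measurable b.2 ∧
        Integrable (fun x => b.2 x - b.1 x) P ∧ ∫ x, (b.2 x - b.1 x) ∂P < ε) ∧
      ∀ φ ∈ Φ, ∃ b ∈ B, ∀ x, b.1 x ≤ φ x ∧ φ x ≤ b.2 x)
    (μ : Measure (ℕ → ℝ)) [IsProbabilityMeasure μ]
    (hmap : ∀ k : ℕ, μ.map (fun ω => ω k) = P)
    (hind : iIndepFun (m := fun _ : ℕ => (inferInstance : MeasurableSpace ℝ))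
      (fun k (ω : ℕ → ℝ) => ω k) μ) :
    ∃ G : ℕ → (ℕ → ℝ) → EReal,
      (∀ n : ℕ, IsMinMeasCover μ
        (fun ω => ⨆ φ : Φ, ((|(n : ℝ)⁻¹ * ∑ k ∈ Finset.range n, φ.1 (ω k) -
          ∫ x, φ.1 x ∂P| : ℝ) : EReal)) (G n)) ∧
      ∀ᵐ ω ∂μ, Tendsto (fun n : ℕ => G n ω) atTop (𝓝 (0 : EReal)) :=
  bracketing_glivenko_cantelli_general P Φ hΦne hΦi hbr μ hmap hind
end
end

section
/- If the index set T of the family 𝒫 = {P_t : t ∈ T} is finite, then the estimator Ê̲_n^𝒫(f) := min_{t∈T} (1/n) ∑_{k=1}^n f_t(X_k^P) is a strongly consistent estimator of the lower expectation E̲^𝒫(f) := min_{t∈T} E^{P_t}(f); that is, Ê̲_n^𝒫(f) → E̲^𝒫(f) P^∞-almost surely as n → ∞ (the estimator is measurable since T is finite). -/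
/-!
Since `E^P(f_t) = E^{P_t}(f)`, the strong law of large numbers applied to the i.i.d. sequence
`f_t(X_k)` makes each empirical mean converge almost surely to `E^{P_t}(f)`. As `T` is finite,
this holds for all `t` simultaneously off a null set, and a minimum over finitely many indices
is continuous, so it passes to the limit.
-/

open MeasureTheory Filter Topology ProbabilityTheory

theorem Filter.Tendsto.ciInf_of_finite {ι X L : Type*} [Finite ι] [Nonempty ι]
    [ConditionallyCompleteLattice L] [TopologicalSpace L] [ContinuousInf L]
    {l : Filter X} {u : ι → X → L} {a : ι → L} (h : ∀ i, Tendsto (u i) l (𝓝 (a i))) :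
    Tendsto (fun x ↦ ⨅ i, u i x) l (𝓝 (⨅ i, a i)) := by
  have := Fintype.ofFinite ι
  simp only [← Finset.inf'_univ_eq_ciInf]
  exact Tendsto.finset_inf'_nhds_apply Finset.univ_nonempty fun i _ ↦ h i

theorem strong_law_ae_comp {Ω α : Type*} [MeasurableSpace Ω]
    [MeasurableSpace α] {μ : Measure Ω} {P : Measure α} {X : ℕ → Ω → α}
    (hX : ∀ k, AEMeasurable (X k) μ) (hind : iIndepFun X μ) (hlaw : ∀ k, μ.map (X k) = P)
    {g : α → ℝ} (hg : Measurable g) (hgi : Integrable g P) :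
    ∀ᵐ ω ∂μ, Tendsto (fun n : ℕ ↦ (n : ℝ)⁻¹ * ∑ k ∈ Finset.range n, g (X k ω))
      atTop (𝓝 (∫ x, g x ∂P)) := by
  have hint : Integrable (g ∘ X 0) μ := by
    rw [← integrable_map_measure hg.aestronglyMeasurable (hX 0), hlaw 0]
    exact hgi
  have hident (k : ℕ) : IdentDistrib (g ∘ X k) (g ∘ X 0) μ μ :=
    (IdentDistrib.mk (hX k) (hX 0) (by rw [hlaw k, hlaw 0])).comp hg
  have hmean : μ[g ∘ X 0] = ∫ x, g x ∂P := by
    rw [← hlaw 0, integral_map (hX 0) hg.aestronglyMeasurable]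
    rfl
  have := strong_law_ae (fun k ↦ g ∘ X k) hint
    (fun i j hij ↦ (hind.indepFun hij).comp hg hg) hident
  rw [hmean] at this
  simpa only [smul_eq_mul, Function.comp_apply] using this

theorem finite_index_consistency_general
    {T : Type*} [Fintype T] [Nonempty T]
    (Pt : T → Measure ℝ)
    (P : Measure ℝ)
    (f : ℝ → ℝ)
    (ft : T → ℝ → ℝ)
    (hftm : ∀ t, Measurable (ft t)) (hfti : ∀ t, Integrable (ft t) P)
    (hfte : ∀ t, ∫ x, ft t x ∂P = ∫ x, f x ∂(Pt t))
    (μ : Measure (ℕ → ℝ))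
    (hmap : ∀ k : ℕ, μ.map (fun ω => ω k) = P)
    (hind : iIndepFun (fun k (ω : ℕ → ℝ) => ω k) μ) :
    ∀ᵐ ω ∂μ, Tendsto
      (fun n : ℕ => ⨅ t : T, (n : ℝ)⁻¹ * ∑ k ∈ Finset.range n, ft t (ω k))
      atTop (𝓝 (⨅ t : T, ∫ x, f x ∂(Pt t))) := by
  have hlln (t : T) := strong_law_ae_comp
    (fun k ↦ (measurable_pi_apply k).aemeasurable) hind hmap (hftm t) (hfti t)
  filter_upwards [ae_all_iff.2 hlln] with ω hω
  simp only [← hfte]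
  exact Tendsto.ciInf_of_finite hω

/-- If the index set `T` is finite, then the (measurable) estimator
`Ê̲_n^𝒫(f) = min_{t∈T} (1/n) ∑_{k=1}^n f_t(X_k)` converges `P^∞`-almost surely to the lower
expectation `E̲^𝒫(f) = min_{t∈T} E^{P_t}(f)`. -/
theorem finite_index_consistency
    {T : Type*} [Fintype T] [Nonempty T]
    (Pt : T → Measure ℝ) (hPt : ∀ t, IsProbabilityMeasure (Pt t))
    (P : Measure ℝ) [IsProbabilityMeasure P]
    (f : ℝ → ℝ) (hf : Measurable f)
    (hfint : ∀ t, Integrable f (Pt t))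
    (ft : T → ℝ → ℝ)
    (hftm : ∀ t, Measurable (ft t)) (hfti : ∀ t, Integrable (ft t) P)
    (hfte : ∀ t, ∫ x, ft t x ∂P = ∫ x, f x ∂(Pt t))
    (hftea : ∀ t, ∫ x, |ft t x| ∂P = ∫ x, |f x| ∂(Pt t))
    (μ : Measure (ℕ → ℝ)) [IsProbabilityMeasure μ]
    (hmap : ∀ k : ℕ, μ.map (fun ω => ω k) = P)
    (hind : iIndepFun (fun k (ω : ℕ → ℝ) => ω k) μ) :
    ∀ᵐ ω ∂μ, Tendsto
      (fun n : ℕ => ⨅ t : T, (n : ℝ)⁻¹ * ∑ k ∈ Finset.range n, ft t (ω k))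
      atTop (𝓝 (⨅ t : T, ∫ x, f x ∂(Pt t))) :=
  finite_index_consistency_general Pt P f ft hftm hfti hfte μ hmap hind
end
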